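/- Let L : ℝ[X] → ℝ be a linear functional and (P_k)_{k≥0} monic real polynomials with deg P_k = k such that L(P_j·P_k) = 0 for j ≠ k and L(P_k²) ≠ 0 for all k. Define the inversion coefficients a(n,l) := L(X^n·P_l)/L(P_l²) and the linearisation coefficients b(n,m,j) := L(P_n·P_m·P_j)/L(P_j²). Let α be a nonzero real number and set p_k(X) := α^k·P_k(X/α) (the monic degree-k polynomial obtained by rescaling). Then for all integers p, k ≥ 0 one has the identity in ℝ[X]: X^p·p_k(X) = Σ_{j=0}^{k+p} [ α^{p+k−j} · Σ_{l=max(j−k,0)}^{p} a(p,l)·b(l,k,j) ] · p_j(X). -/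

import Mathlib

/-!
In an orthogonal basis the coefficient of `P j` in `f` is `L (f * P j) / L (P j * P j)`: the
expansion map with these coefficients fixes every `P i` with `i ≤ n`, and these span the
polynomials of degree `≤ n`. Expanding `X ^ p = ∑ a p l • P l` and `P l * P k = ∑ b l k j • P j`
gives the identity for `P` itself, where `b l k j = 0` for `j > l + k` because `P j` is
orthogonal to every polynomial of smaller degree. Substituting `X ↦ X / α` and multiplying by
`α ^ (p + k)` turns each `P j` into `p j` at the cost of the factor `α ^ (p + k - j)`.
-/

open Polynomial Finset

section OrthogonalFamily

variable {K : Type*} [Field K] (L : K[X] →ₗ[K] K) {P : ℕ → K[X]}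

theorem span_image_Iio_eq_degreeLT (hmonic : ∀ k, (P k).Monic) (hdeg : ∀ k, (P k).natDegree = k)
    (n : ℕ) : Submodule.span K (P '' Set.Iio n) = degreeLT K n := by
  let S : Sequence K :=
    ⟨P, fun k => by rw [degree_eq_natDegree (hmonic k).ne_zero, hdeg]⟩
  exact S.span_degreeLT fun k _ => by simp [S, (hmonic k).leadingCoeff]

variable (P) in
noncomputable def orthoCoeff (j : ℕ) : K[X] →ₗ[K] K :=
  (L (P j * P j))⁻¹ • (L ∘ₗ LinearMap.mulRight K (P j))

theorem orthoCoeff_apply (j : ℕ) (f : K[X]) :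
    orthoCoeff L P j f = L (f * P j) / L (P j * P j) := by
  simp [orthoCoeff, div_eq_inv_mul]

theorem orthoCoeff_self (horth : ∀ j k, j ≠ k → L (P j * P k) = 0)
    (hnz : ∀ k, L (P k * P k) ≠ 0) (i j : ℕ) : orthoCoeff L P j (P i) = if i = j then 1 else 0 := by
  rw [orthoCoeff_apply]
  split_ifs with hij
  · exact hij ▸ div_self (hnz i)
  · rw [horth i j hij, zero_div]

variable (hmonic : ∀ k, (P k).Monic) (hdeg : ∀ k, (P k).natDegree = k)
  (horth : ∀ j k, j ≠ k → L (P j * P k) = 0)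
include hmonic hdeg horth

theorem map_mul_eq_zero_of_natDegree_lt {f : K[X]} {j : ℕ} (hf : f.natDegree < j) :
    L (f * P j) = 0 := by
  have hspan : degreeLT K j ≤ LinearMap.ker (L ∘ₗ LinearMap.mulRight K (P j)) := by
    rw [← span_image_Iio_eq_degreeLT hmonic hdeg, Submodule.span_le]
    rintro _ ⟨i, hi, rfl⟩
    exact horth i j (ne_of_lt hi)
  exact hspan (mem_degreeLT.2 (degree_le_natDegree.trans_lt (Nat.cast_lt.2 hf)))

theorem orthoCoeff_eq_zero_of_natDegree_lt {f : K[X]} {j : ℕ} (hf : f.natDegree < j) :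
    orthoCoeff L P j f = 0 := by
  rw [orthoCoeff_apply, map_mul_eq_zero_of_natDegree_lt L hmonic hdeg horth hf, zero_div]

variable (hnz : ∀ k, L (P k * P k) ≠ 0)
include hnz

theorem eq_sum_orthoCoeff_smul {f : K[X]} {n : ℕ} (hf : f.natDegree ≤ n) :
    f = ∑ j ∈ range (n + 1), orthoCoeff L P j f • P j := by
  let expand : K[X] →ₗ[K] K[X] := ∑ j ∈ range (n + 1), (orthoCoeff L P j).smulRight (P j)
  have hgen : Set.EqOn (LinearMap.id : K[X] →ₗ[K] K[X]) expand (P '' Set.Iio (n + 1)) := by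
    rintro _ ⟨i, hi, rfl⟩
    simp [expand, orthoCoeff_self L horth hnz, Set.mem_Iio.1 hi]
  have hmem : f ∈ Submodule.span K (P '' Set.Iio (n + 1)) := by
    rw [span_image_Iio_eq_degreeLT hmonic hdeg, mem_degreeLT]
    exact degree_le_natDegree.trans_lt (Nat.cast_lt.2 (Nat.lt_succ_of_le hf))
  simpa [expand] using LinearMap.eqOn_span' hgen hmem

theorem orthoCoeff_mul {f : K[X]} {n : ℕ} (hf : f.natDegree ≤ n) (j k : ℕ) :
    orthoCoeff L P j (f * P k) =
      ∑ l ∈ Icc (j - k) n, orthoCoeff L P l f * orthoCoeff L P j (P l * P k) := by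
  conv_lhs => rw [eq_sum_orthoCoeff_smul L hmonic hdeg horth hnz hf]
  simp only [sum_mul, smul_mul_assoc, map_sum, map_smul, smul_eq_mul]
  symm
  refine sum_subset (fun l hl => by simp only [mem_Icc, mem_range] at hl ⊢; omega) fun l hl hl' => ?_
  have hlk : (P l * P k).natDegree < j := by
    rw [(hmonic l).natDegree_mul (hmonic k), hdeg, hdeg]
    simp only [mem_range, mem_Icc, not_and_or, not_le] at hl hl'
    omega
  rw [orthoCoeff_eq_zero_of_natDegree_lt L hmonic hdeg horth hlk, mul_zero]

theorem X_pow_mul_eq_sum (p k : ℕ) :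
    X ^ p * P k = ∑ j ∈ range (k + p + 1),
      (∑ l ∈ Icc (j - k) p, orthoCoeff L P l (X ^ p) * orthoCoeff L P j (P l * P k)) • P j := by
  have hdeg_mul : (X ^ p * P k).natDegree ≤ k + p := by
    rw [(monic_X_pow p).natDegree_mul (hmonic k), natDegree_X_pow, hdeg, add_comm]
  conv_lhs => rw [eq_sum_orthoCoeff_smul L hmonic hdeg horth hnz hdeg_mul]
  simp only [orthoCoeff_mul L hmonic hdeg horth hnz (natDegree_X_pow_le p)]

end OrthogonalFamily

theorem smul_X_pow_mul_comp_C_inv_mul_X {K : Type*} [Field K] {α : K} (hα : α ≠ 0)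
    (f : K[X]) (n k : ℕ) :
    α ^ (n + k) • (X ^ n * f).comp (C α⁻¹ * X) = X ^ n * (α ^ k • f.comp (C α⁻¹ * X)) := by
  rw [mul_comp, X_pow_comp, mul_pow, ← C_pow, mul_assoc, ← smul_eq_C_mul, smul_smul,
    mul_smul_comm, pow_add, inv_pow, mul_right_comm, mul_inv_cancel₀ (pow_ne_zero n hα), one_mul]

theorem scaling_lemma
    (L : Polynomial ℝ →ₗ[ℝ] ℝ) (P : ℕ → Polynomial ℝ)
    (hmonic : ∀ k, (P k).Monic) (hdeg : ∀ k, (P k).natDegree = k)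
    (horth : ∀ j k, j ≠ k → L (P j * P k) = 0)
    (hnz : ∀ k, L (P k * P k) ≠ 0)
    (α : ℝ) (hα : α ≠ 0)
    (p : ℕ → Polynomial ℝ)
    (hp : ∀ k, p k = α ^ k • (P k).comp (Polynomial.C α⁻¹ * Polynomial.X))
    (a : ℕ → ℕ → ℝ)
    (ha : ∀ n l, a n l = L (Polynomial.X ^ n * P l) / L (P l * P l))
    (b : ℕ → ℕ → ℕ → ℝ)
    (hb : ∀ n m j, b n m j = L (P n * P m * P j) / L (P j * P j))
    (pp k : ℕ) :
    Polynomial.X ^ pp * p k =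
      ∑ j ∈ Finset.range (k + pp + 1),
        (α ^ (pp + k - j) * ∑ l ∈ Finset.Icc (j - k) pp, a pp l * b l k j) • p j := by
  have ha' : ∀ l, a pp l = orthoCoeff L P l (X ^ pp) := fun l => by rw [ha, orthoCoeff_apply]
  have hb' : ∀ l j, b l k j = orthoCoeff L P j (P l * P k) := fun l j => by
    rw [hb, orthoCoeff_apply]
  calc X ^ pp * p k = α ^ (pp + k) • (X ^ pp * P k).comp (C α⁻¹ * X) := by
        rw [hp, smul_X_pow_mul_comp_C_inv_mul_X hα]
    _ = α ^ (pp + k) • ∑ j ∈ range (k + pp + 1),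
          (∑ l ∈ Icc (j - k) pp, a pp l * b l k j) • (P j).comp (C α⁻¹ * X) := by
        rw [X_pow_mul_eq_sum L hmonic hdeg horth hnz, Polynomial.sum_comp]
        simp only [smul_comp, ha', hb']
    _ = _ := by
        rw [smul_sum]
        refine sum_congr rfl fun j hj => ?_
        have hj : j ≤ pp + k := by rw [mem_range] at hj; omega
        rw [hp, smul_smul, smul_smul, ← pow_sub_mul_pow α hj, mul_right_comm]
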